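/- arXiv:1605.05354 — 7 statements merged into one kernel-verified Lean document; each statement's English description precedes it below -/
import Mathlib

section
/- If a subshift X over a finite alphabet has the specification property with gap constant τ, then X has left almost specification with constant mistake function g ≡ τ: for any words w¹, w² in the language of X, there exists a word w̄¹ with |w̄¹| = |w¹|, Hamming distance d_H(w̄¹, w¹) ≤ τ, and w̄¹w² in the language of X. -/
open Real Filter MeasureTheory

/-- The left shift map on bi-infinite sequences. -/
def shiftMap {A : Type*} (x : ℤ → A) : ℤ → A := fun i => x (i + 1)

/-- The word of length `n` read from `x` starting at position `i`. -/
def wordAt {A : Type*} (x : ℤ → A) (i : ℤ) (n : ℕ) : List A :=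
  List.ofFn (fun k : Fin n => x (i + (k : ℕ)))

/-- A word `w` belongs to the language of a set `S` of bi-infinite sequences if it
occurs somewhere in some point of `S`. -/
def InLangS {A : Type*} (S : Set (ℤ → A)) (w : List A) : Prop :=
  ∃ x ∈ S, ∃ i : ℤ, wordAt x i w.length = w

/-- Hamming distance between two words of the same length: the number of
positions at which they differ. -/
def listHamming {A : Type*} [DecidableEq A] (v w : List A) : ℕ :=
  (List.zipWith (fun a b => if a = b then 0 else 1) v w).sum

/-- A subshift: a closed, shift-invariant set of bi-infinite sequences over a
finite (discrete) alphabet. -/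
structure Subshift (A : Type*) [TopologicalSpace A] where
  carrier : Set (ℤ → A)
  isClosed : IsClosed carrier
  invariant : ∀ x ∈ carrier, shiftMap x ∈ carrier

/-- Topological entropy of (the language of) `S`, as the infimum of
`(1/n) log |L_n(S)|` (equal to the limit by subadditivity). -/
noncomputable def langEntropy {A : Type*} (S : Set (ℤ → A)) : ℝ :=
  ⨅ n : ℕ+, Real.log ({w : List A | w.length = (n : ℕ) ∧ InLangS S w}.ncard) / (n : ℝ)

/-! Cut `w¹` at `|w¹| - τ` and glue its prefix to `w²` with a specification gap `u` of length `τ`: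
the new word differs from `w¹` only in its last `τ` letters. If `|w¹| < τ`, glue the empty word
to `w²` instead and keep the last `|w¹|` letters of the gap. -/

section Language

variable {A : Type*}

lemma wordAt_take (x : ℤ → A) (i : ℤ) (n m : ℕ) :
    (wordAt x i n).take m = wordAt x i (min m n) := by
  apply List.ext_getElem <;> simp [wordAt]

lemma wordAt_drop (x : ℤ → A) (i : ℤ) (n m : ℕ) :
    (wordAt x i n).drop m = wordAt x (i + m) (n - m) := by
  apply List.ext_getElem
  · simp [wordAt]
  · intro k _ _
    simp [wordAt, add_assoc]

variable {S : Set (ℤ → A)} {w : List A}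

lemma InLangS.take (h : InLangS S w) (m : ℕ) : InLangS S (w.take m) := by
  obtain ⟨x, hx, i, hw⟩ := h
  refine ⟨x, hx, i, ?_⟩
  rw [List.length_take, ← wordAt_take, hw]

lemma InLangS.drop (h : InLangS S w) (m : ℕ) : InLangS S (w.drop m) := by
  obtain ⟨x, hx, i, hw⟩ := h
  refine ⟨x, hx, i + m, ?_⟩
  rw [List.length_drop, ← wordAt_drop, hw]

lemma InLangS.nil (h : InLangS S w) : InLangS S [] := by
  simpa using h.take 0

end Language

section Hamming

variable {A : Type*} [DecidableEq A]

lemma listHamming_le_length (v w : List A) : listHamming v w ≤ v.length := by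
  unfold listHamming
  calc _ ≤ (List.zipWith (fun a b => if a = b then 0 else 1) v w).length • 1 :=
        List.sum_le_card_nsmul _ _ fun n hn => by
          obtain ⟨i, -, rfl⟩ := List.mem_iff_getElem.1 hn
          simp only [List.getElem_zipWith]
          split <;> omega
    _ ≤ v.length := by simp

lemma listHamming_append_left (u v w : List A) :
    listHamming (u ++ v) (u ++ w) = listHamming v w := by
  induction u with
  | nil => rfl
  | cons a u ih => simpa [listHamming] using ih

end Hamming

theorem stmt2_general {A : Type*} [DecidableEq A]
    [TopologicalSpace A]
    (X : Subshift A) (τ : ℕ)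
    (hspec : ∀ v w : List A, InLangS X.carrier v → InLangS X.carrier w →
      ∃ u : List A, u.length = τ ∧ InLangS X.carrier u ∧
        InLangS X.carrier (v ++ u ++ w)) :
    ∀ w1 w2 : List A, InLangS X.carrier w1 → InLangS X.carrier w2 →
      ∃ b : List A, b.length = w1.length ∧ listHamming b w1 ≤ τ ∧
        InLangS X.carrier (b ++ w2) := by
  intro w1 w2 h1 h2
  rcases le_or_gt τ w1.length with hτ | hτ
  · set v := w1.take (w1.length - τ)
    obtain ⟨u, hu, -, hvuw⟩ := hspec v w2 (h1.take _) h2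
    refine ⟨v ++ u, by simp [v, hu]; omega, ?_, hvuw⟩
    calc listHamming (v ++ u) w1
        = listHamming (v ++ u) (v ++ w1.drop (w1.length - τ)) := by rw [List.take_append_drop]
      _ = listHamming u (w1.drop (w1.length - τ)) := listHamming_append_left _ _ _
      _ ≤ τ := hu ▸ listHamming_le_length _ _
  · obtain ⟨u, hu, -, huw⟩ := hspec [] w2 h1.nil h2
    have hb : (u.drop (τ - w1.length)).length = w1.length := by simp [hu]; omega
    refine ⟨u.drop (τ - w1.length), hb, ?_, ?_⟩
    · exact (listHamming_le_length _ _).trans (hb.trans_le hτ.le)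
    · simpa [List.drop_append_of_le_length, hu] using huw.drop (τ - w1.length)

/-- Specification implies left almost specification with constant mistake
function `g ≡ τ`. -/
theorem stmt2 {A : Type*} [Fintype A] [DecidableEq A]
    [TopologicalSpace A] [DiscreteTopology A]
    (X : Subshift A) (τ : ℕ)
    (hspec : ∀ v w : List A, InLangS X.carrier v → InLangS X.carrier w →
      ∃ u : List A, u.length = τ ∧ InLangS X.carrier u ∧
        InLangS X.carrier (v ++ u ++ w)) :
    ∀ w1 w2 : List A, InLangS X.carrier w1 → InLangS X.carrier w2 →
      ∃ b : List A, b.length = w1.length ∧ listHamming b w1 ≤ τ ∧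
        InLangS X.carrier (b ++ w2) :=
  stmt2_general X τ hspec
end

section
/- Let X be a subshift with almost specification with constant mistake function g ≡ m over alphabet A. Then for every n ∈ ℕ, the number of words of length n in the language satisfies |L_n(X)| ≤ |A|^{2m} · n^{2m} · e^{n·h(X)}, where h(X) is the topological entropy of X. -/
open Real Filter MeasureTheory

/-! Let `T ⊆ L_n(X)` be maximal among subsets whose points are pairwise more than `2m` apart in
Hamming distance. The Hamming balls of radius `2m` around `T` cover `L_n(X)`, and each has at most
`(n |A|)^{2m}` elements. Gluing `k` words of `T` by almost specification changes each of them in at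
most `m` places, so separation makes the glued word determine the tuple: `|T|^k ≤ |L_{kn}(X)|`.
Cutting words of `L_{kn}(X)` into `n` blocks gives `|L_{kn}(X)| ≤ |L_k(X)|^n`, hence
`log |T| ≤ n · (1/k) log |L_k(X)|` for all `k`, i.e. `|T| ≤ e^{n h(X)}`. -/

section Hamming

variable {ι β : Type*} [Fintype ι] [DecidableEq β]

def hammingBall [DecidableEq ι] [Fintype β] (s : ι → β) (r : ℕ) : Finset (ι → β) :=
  {w | hammingDist w s ≤ r}

theorem hammingDist_update_self_of_ne [DecidableEq ι] {w s : ι → β} {i : ι}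
    (h : w i ≠ s i) :
    hammingDist w (Function.update s i (w i)) = hammingDist w s - 1 := by
  have hfilter : ({j | w j ≠ Function.update s i (w i) j} : Finset ι)
      = ({j | w j ≠ s j} : Finset ι).erase i := by
    ext j
    by_cases hj : j = i
    · subst hj; simp
    · simp [hj]
  rw [hammingDist, hfilter, Finset.card_erase_of_mem (by simpa using h), hammingDist]

-- The truncated subtraction makes this hold for `w = s` as well.
theorem exists_hammingDist_update_le [DecidableEq ι] [Nonempty ι] (w s : ι → β) :
    ∃ i, hammingDist w (Function.update s i (w i)) ≤ hammingDist w s - 1 := by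
  by_cases hws : w = s
  · obtain ⟨i⟩ := ‹Nonempty ι›
    exact ⟨i, by simp [hws]⟩
  · obtain ⟨i, hi⟩ := Function.ne_iff.mp hws
    exact ⟨i, (hammingDist_update_self_of_ne hi).le⟩

theorem card_hammingBall_le [DecidableEq ι] [Fintype β] [Nonempty ι] (s : ι → β) (r : ℕ) :
    (hammingBall s r).card ≤ (Fintype.card ι * Fintype.card β) ^ r := by
  induction r generalizing s with
  | zero => simp [hammingBall, Finset.card_le_one]
  | succ r ih =>
    have hcover : hammingBall s (r + 1) ⊆
        (Finset.univ : Finset (ι × β)).biUnion fun p =>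
          hammingBall (Function.update s p.1 p.2) r := by
      intro w hw
      obtain ⟨i, hi⟩ := exists_hammingDist_update_le w s
      simp only [hammingBall, Finset.mem_filter, Finset.mem_univ, true_and] at hw
      exact Finset.mem_biUnion.mpr ⟨(i, w i), Finset.mem_univ _, by
        simp only [hammingBall, Finset.mem_filter, Finset.mem_univ, true_and]; omega⟩
    calc (hammingBall s (r + 1)).card
        ≤ Finset.univ.card * (Fintype.card ι * Fintype.card β) ^ r :=
          (Finset.card_le_card hcover).trans
            (Finset.card_biUnion_le_card_mul _ _ _ fun p _ => ih _)
      _ = (Fintype.card ι * Fintype.card β) ^ (r + 1) := by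
          rw [Finset.card_univ, Fintype.card_prod, pow_succ, mul_comm]

theorem exists_separated_subset_covering (F : Finset (ι → β)) (r : ℕ) :
    ∃ S ⊆ F, (S : Set (ι → β)).Pairwise (fun a b => r < hammingDist a b) ∧
      ∀ w ∈ F, ∃ s ∈ S, hammingDist w s ≤ r := by
  induction F using Finset.induction_on with
  | empty => exact ⟨∅, subset_rfl, by simp, by simp⟩
  | insert a F _ ih =>
    obtain ⟨S, hSF, hsep, hcov⟩ := ih
    by_cases hnear : ∃ s ∈ S, hammingDist a s ≤ r
    · refine ⟨S, hSF.trans (Finset.subset_insert _ _), hsep, ?_⟩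
      simpa only [Finset.forall_mem_insert] using ⟨hnear, hcov⟩
    · push Not at hnear
      refine ⟨insert a S, Finset.insert_subset_insert _ hSF, ?_, ?_⟩
      · rw [Finset.coe_insert]
        refine hsep.insert fun b hb _ => ⟨hnear b hb, ?_⟩
        rw [hammingDist_comm]
        exact hnear b hb
      · simp only [Finset.forall_mem_insert]
        refine ⟨⟨a, Finset.mem_insert_self _ _, by simp⟩, fun w hw => ?_⟩
        obtain ⟨s, hs, hws⟩ := hcov w hw
        exact ⟨s, Finset.mem_insert_of_mem hs, hws⟩

theorem exists_separated_subset_card_le [DecidableEq ι] [Fintype β] [Nonempty ι]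
    (F : Finset (ι → β)) (r : ℕ) :
    ∃ S ⊆ F, (S : Set (ι → β)).Pairwise (fun a b => r < hammingDist a b) ∧
      F.card ≤ S.card * (Fintype.card ι * Fintype.card β) ^ r := by
  obtain ⟨S, hSF, hsep, hcov⟩ := exists_separated_subset_covering F r
  refine ⟨S, hSF, hsep, (Finset.card_le_card fun w hw => ?_).trans
    (Finset.card_biUnion_le_card_mul S (hammingBall · r) _ fun s _ => card_hammingBall_le s r)⟩
  obtain ⟨s, hs, hws⟩ := hcov w hw
  exact Finset.mem_biUnion.mpr ⟨s, hs, by simpa [hammingBall] using hws⟩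

end Hamming

section Language

variable {A : Type*}

theorem inLangS_ofFn_iff {S : Set (ℤ → A)} {n : ℕ} (w : Fin n → A) :
    InLangS S (List.ofFn w) ↔
      ∃ x ∈ S, ∃ p : ℤ, ∀ j : Fin n, x (p + (j : ℕ)) = w j := by
  simp [InLangS, wordAt, funext_iff]

open Classical in
noncomputable def langFinset [Fintype A] (S : Set (ℤ → A)) (n : ℕ) : Finset (Fin n → A) :=
  {w | InLangS S (List.ofFn w)}

@[simp]
theorem mem_langFinset [Fintype A] {S : Set (ℤ → A)} {n : ℕ} {w : Fin n → A} :
    w ∈ langFinset S n ↔ InLangS S (List.ofFn w) := by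
  simp [langFinset]

theorem ncard_lang_eq_card_langFinset [Fintype A] (S : Set (ℤ → A)) (n : ℕ) :
    {w : List A | w.length = n ∧ InLangS S w}.ncard = (langFinset S n).card := by
  have himage : {w : List A | w.length = n ∧ InLangS S w}
      = List.ofFn '' (langFinset S n : Set (Fin n → A)) := by
    ext w
    constructor
    · rintro ⟨rfl, hw⟩
      exact ⟨w.get, by simpa using hw, List.ofFn_get w⟩
    · rintro ⟨w, hw, rfl⟩
      exact ⟨List.length_ofFn, mem_langFinset.mp hw⟩
  rw [himage, Set.ncard_image_of_injective _ List.ofFn_injective, Set.ncard_coe_finset]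

theorem inLangS_ofFn_block {S : Set (ℤ → A)} {k n : ℕ} {w : Fin (k * n) → A}
    (hw : InLangS S (List.ofFn w)) (i : Fin k) :
    InLangS S (List.ofFn fun j : Fin n => w (finProdFinEquiv (i, j))) := by
  obtain ⟨x, hx, p, hp⟩ := (inLangS_ofFn_iff w).mp hw
  refine (inLangS_ofFn_iff _).mpr ⟨x, hx, p + (n * i : ℕ), fun j => ?_⟩
  rw [← hp]
  congr 1
  simp only [finProdFinEquiv_apply_val]
  push_cast
  ring

theorem card_langFinset_mul_le [Fintype A] (S : Set (ℤ → A)) (k n : ℕ) :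
    (langFinset S (k * n)).card ≤ (langFinset S n).card ^ k := by
  classical
  calc (langFinset S (k * n)).card
      ≤ (Fintype.piFinset fun _ : Fin k => langFinset S n).card := by
        refine Finset.card_le_card_of_injOn (fun w => Function.curry (w ∘ finProdFinEquiv))
          (fun w hw => ?_) ?_
        · exact Fintype.mem_piFinset.mpr fun i =>
            mem_langFinset.mpr (inLangS_ofFn_block (mem_langFinset.mp hw) i)
        · exact fun w _ w' _ h =>
            (Function.curry_injective.comp finProdFinEquiv.surjective.injective_comp_right) h
    _ = (langFinset S n).card ^ k := by simp

end Language

theorem List.zipWith_ofFn {α β γ : Type*} (f : α → β → γ) {n : ℕ} (u : Fin n → α)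
    (v : Fin n → β) :
    List.zipWith f (List.ofFn u) (List.ofFn v) = List.ofFn fun i => f (u i) (v i) :=
  List.ext_getElem (by simp) (by simp)

theorem listHamming_ofFn {A : Type*} [DecidableEq A] {n : ℕ} (u v : Fin n → A) :
    listHamming (List.ofFn u) (List.ofFn v) = hammingDist u v := by
  rw [listHamming, List.zipWith_ofFn, List.sum_ofFn, hammingDist, Finset.card_filter]
  simp only [ne_eq, ite_not]

theorem List.exists_ofFn_eq {α : Type*} {n : ℕ} {l : List α} (h : l.length = n) :
    ∃ u : Fin n → α, List.ofFn u = l := by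
  subst h
  exact ⟨l.get, List.ofFn_get l⟩

section Gluing

variable {A : Type*}

def flattenWord {k n : ℕ} (b : Fin k → Fin n → A) : Fin (k * n) → A :=
  Function.uncurry b ∘ finProdFinEquiv.symm

theorem flattenWord_injective {k n : ℕ} :
    Function.Injective (flattenWord : (Fin k → Fin n → A) → Fin (k * n) → A) :=
  finProdFinEquiv.symm.surjective.injective_comp_right.comp Function.uncurry_injective

theorem ofFn_flattenWord {k n : ℕ} (b : Fin k → Fin n → A) :
    List.ofFn (flattenWord b) = (List.ofFn fun i => List.ofFn (b i)).flatten := by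
  rw [List.ofFn_mul]
  congr! with i j
  generalize_proofs hlt
  have hij : (⟨i * n + j, hlt⟩ : Fin (k * n)) = finProdFinEquiv (i, j) :=
    Fin.ext (by simp [mul_comm, add_comm])
  simp [flattenWord, hij]

def AlmostSpecification [DecidableEq A] (S : Set (ℤ → A)) (m : ℕ) : Prop :=
  ∀ (k : ℕ) (ws : Fin k → List A), (∀ i, InLangS S (ws i)) →
    ∃ bars : Fin k → List A,
      (∀ i, (bars i).length = (ws i).length ∧ listHamming (bars i) (ws i) ≤ m ∧
        InLangS S (bars i)) ∧
      InLangS S (List.ofFn bars).flatten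

variable [Fintype A] [DecidableEq A] {S : Set (ℤ → A)} {m : ℕ}

theorem AlmostSpecification.exists_flattenWord_mem (hS : AlmostSpecification S m) {k n : ℕ}
    {σ : Fin k → Fin n → A} (hσ : ∀ i, σ i ∈ langFinset S n) :
    ∃ b : Fin k → Fin n → A, (∀ i, hammingDist (b i) (σ i) ≤ m) ∧
      flattenWord b ∈ langFinset S (k * n) := by
  obtain ⟨bars, hbars, hglued⟩ :=
    hS k (fun i => List.ofFn (σ i)) fun i => mem_langFinset.mp (hσ i)
  choose b hb using fun i => List.exists_ofFn_eq ((hbars i).1.trans List.length_ofFn)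
  refine ⟨b, fun i => ?_, ?_⟩
  · rw [← listHamming_ofFn, hb]
    exact (hbars i).2.1
  · rw [mem_langFinset, ofFn_flattenWord]
    simpa only [hb] using hglued

theorem AlmostSpecification.card_pow_le (hS : AlmostSpecification S m) {n : ℕ}
    {T : Finset (Fin n → A)} (hT : T ⊆ langFinset S n)
    (hsep : (T : Set (Fin n → A)).Pairwise fun a b => 2 * m < hammingDist a b) (k : ℕ) :
    T.card ^ k ≤ (langFinset S (k * n)).card := by
  have hglue : ∀ σ : Fin k → Fin n → A, ∃ b : Fin k → Fin n → A,
      (∀ i, σ i ∈ T) →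
      (∀ i, hammingDist (b i) (σ i) ≤ m) ∧ flattenWord b ∈ langFinset S (k * n) := by
    intro σ
    by_cases hσ : ∀ i, σ i ∈ T
    · obtain ⟨b, hb⟩ := hS.exists_flattenWord_mem fun i => hT (hσ i)
      exact ⟨b, fun _ => hb⟩
    · exact ⟨σ, fun h => absurd h hσ⟩
  choose glue hglue using hglue
  calc T.card ^ k = (Fintype.piFinset fun _ : Fin k => T).card := by simp
    _ ≤ (langFinset S (k * n)).card := by
      refine Finset.card_le_card_of_injOn (fun σ => flattenWord (glue σ))
        (fun σ hσ => (hglue σ (Fintype.mem_piFinset.mp hσ)).2) fun σ hσ σ' hσ' heq => ?_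
      have hσ := Fintype.mem_piFinset.mp hσ
      have hσ' := Fintype.mem_piFinset.mp hσ'
      have hb := flattenWord_injective heq
      funext i
      by_contra hne
      have hclose : hammingDist (σ i) (σ' i) ≤ 2 * m := calc
        hammingDist (σ i) (σ' i)
            ≤ hammingDist (glue σ i) (σ i) + hammingDist (glue σ i) (σ' i) :=
          hammingDist_triangle_left _ _ _
        _ ≤ m + m := by
          gcongr
          · exact (hglue σ hσ).1 i
          · rw [hb]; exact (hglue σ' hσ').1 i
        _ = 2 * m := by ring
      exact (hsep (hσ i) (hσ' i) hne).not_ge hclose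

end Gluing

theorem le_exp_mul_langEntropy {A : Type*} [Fintype A] {S : Set (ℤ → A)} {n c : ℕ}
    (hn : 0 < n) (h : ∀ N : ℕ, 0 < N → c ^ N ≤ (langFinset S N).card ^ n) :
    (c : ℝ) ≤ Real.exp (n * langEntropy S) := by
  rcases c.eq_zero_or_pos with rfl | hc
  · simpa using (Real.exp_pos _).le
  have hlog : Real.log c / n ≤ langEntropy S := by
    refine le_ciInf fun N => ?_
    rw [ncard_lang_eq_card_langFinset, div_le_div_iff₀ (by positivity) (by positivity)]
    have hpow : (c : ℝ) ^ (N : ℕ) ≤ ((langFinset S N).card : ℝ) ^ n := by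
      exact_mod_cast h N N.pos
    have hlogpow := Real.log_le_log (by positivity) hpow
    rw [Real.log_pow, Real.log_pow] at hlogpow
    linarith
  rw [← Real.exp_log (by positivity : (0 : ℝ) < c)]
  exact Real.exp_le_exp.mpr (by rwa [div_le_iff₀ (by positivity), mul_comm] at hlog)

theorem stmt5_general {A : Type*} [Fintype A] [DecidableEq A]
    [TopologicalSpace A]
    (X : Subshift A) (m : ℕ)
    (hAS : ∀ (k : ℕ) (ws : Fin k → List A), (∀ i, InLangS X.carrier (ws i)) →
      ∃ bars : Fin k → List A,
        (∀ i, (bars i).length = (ws i).length ∧ listHamming (bars i) (ws i) ≤ m ∧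
          InLangS X.carrier (bars i)) ∧
        InLangS X.carrier (List.ofFn bars).flatten) :
    ∀ n : ℕ, 1 ≤ n →
      (({w : List A | w.length = n ∧ InLangS X.carrier w}.ncard : ℝ)) ≤
        (Fintype.card A : ℝ) ^ (2 * m) * (n : ℝ) ^ (2 * m) *
          Real.exp ((n : ℝ) * langEntropy X.carrier) := by
  intro n hn
  have : Nonempty (Fin n) := ⟨⟨0, hn⟩⟩
  obtain ⟨T, hTL, hsep, hcover⟩ :=
    exists_separated_subset_card_le (langFinset X.carrier n) (2 * m)
  have hglue (N : ℕ) (_ : 0 < N) : T.card ^ N ≤ (langFinset X.carrier N).card ^ n :=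
    (AlmostSpecification.card_pow_le hAS hTL hsep N).trans
      (Nat.mul_comm n N ▸ card_langFinset_mul_le X.carrier n N)
  rw [ncard_lang_eq_card_langFinset]
  calc ((langFinset X.carrier n).card : ℝ)
      ≤ T.card * ((n : ℝ) * Fintype.card A) ^ (2 * m) := by
        exact_mod_cast hcover.trans_eq (by rw [Fintype.card_fin])
    _ ≤ Real.exp (n * langEntropy X.carrier) * ((n : ℝ) * Fintype.card A) ^ (2 * m) := by
        gcongr
        exact le_exp_mul_langEntropy hn hglue
    _ = _ := by ring

/-- If `X` has almost specification with constant mistake function `g ≡ m`, then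
`|L_n(X)| ≤ |A|^{2m} · n^{2m} · e^{n·h(X)}` for every `n ≥ 1`. -/
theorem stmt5 {A : Type*} [Fintype A] [DecidableEq A]
    [TopologicalSpace A] [DiscreteTopology A]
    (X : Subshift A) (m : ℕ)
    (hAS : ∀ (k : ℕ) (ws : Fin k → List A), (∀ i, InLangS X.carrier (ws i)) →
      ∃ bars : Fin k → List A,
        (∀ i, (bars i).length = (ws i).length ∧ listHamming (bars i) (ws i) ≤ m ∧
          InLangS X.carrier (bars i)) ∧
        InLangS X.carrier (List.ofFn bars).flatten) :
    ∀ n : ℕ, 1 ≤ n →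
      (({w : List A | w.length = n ∧ InLangS X.carrier w}.ncard : ℝ)) ≤
        (Fintype.card A : ℝ) ^ (2 * m) * (n : ℝ) ^ (2 * m) *
          Real.exp ((n : ℝ) * langEntropy X.carrier) :=
  stmt5_general X m hAS
end

section
/- If D is a factorial set of words over a finite alphabet (with D_n nonempty for all n), then the topological entropy of the subshift X(D) consisting of all bi-infinite sequences whose every subword lies in D equals h(D) = lim (1/n) ln|D_n|. -/
/-!
A word of length `n` that extends inside `D` by arbitrarily long words on both sides occurs in a
point of `X(D)`, by compactness of `A^ℤ`. As there are finitely many words of length `n`, one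
margin `K` serves them all: every word of length `n` extending by `K` letters on each side lies
in `L_n(X(D))`. Cutting a word of `D` of length `2K + nt` into two margins of length `K` and `t`
blocks of length `n`, each block is such a word, so `|D_{2K+nt}| ≤ |A|^{2K} |L_n(X(D))|^t`, and
letting `t → ∞` gives `h(D) ≤ log |L_n(X(D))| / n`.
-/

open Real Filter MeasureTheory

/-- A collection of words is factorial if it is closed under passing to
(contiguous) subwords. -/
def Factorial {A : Type*} (D : Set (List A)) : Prop :=
  ∀ u v w : List A, (u ++ v ++ w) ∈ D → v ∈ D

/-- The subshift generated by a factorial collection `D`: all bi-infinite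
sequences whose every finite subword lies in `D`. -/
def genShift {A : Type*} (D : Set (List A)) : Set (ℤ → A) :=
  {x : ℤ → A | ∀ (i : ℤ) (n : ℕ), wordAt x i n ∈ D}

namespace Factorial

variable {A : Type*} {D : Set (List A)}

theorem mem_of_infix (hD : Factorial D) {v w : List A} (hvw : v <:+: w) (hw : w ∈ D) :
    v ∈ D := by
  obtain ⟨s, t, rfl⟩ := hvw
  exact hD s v t hw

end Factorial

section Words

variable {A : Type*}

theorem length_wordAt (x : ℤ → A) (i : ℤ) (n : ℕ) : (wordAt x i n).length = n := by
  simp [wordAt]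

theorem wordAt_add (x : ℤ → A) (i : ℤ) (a b : ℕ) :
    wordAt x i (a + b) = wordAt x i a ++ wordAt x (i + a) b := by
  simp only [wordAt, List.ofFn_add]
  congr 2
  funext k
  simp only [Fin.val_natAdd, Nat.cast_add, add_assoc]

theorem wordAt_infix {x : ℤ → A} {i j : ℤ} {m M : ℕ} (hji : j ≤ i) (hiM : i + m ≤ j + M) :
    wordAt x i m <:+: wordAt x j M := by
  obtain ⟨a, rfl⟩ : ∃ a : ℕ, i = j + a := ⟨(i - j).toNat, by omega⟩
  obtain ⟨b, rfl⟩ : ∃ b : ℕ, M = a + m + b := ⟨M - (a + m), by omega⟩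
  rw [wordAt_add, wordAt_add]
  exact ⟨_, _, rfl⟩

theorem exists_wordAt_eq [Nonempty A] (l : List A) (j : ℤ) :
    ∃ x : ℤ → A, wordAt x j l.length = l := by
  inhabit A
  refine ⟨fun i => l.getD (i - j).toNat default,
    List.ext_getElem (length_wordAt _ _ _) fun k hk _ => ?_⟩
  simp [wordAt]

theorem isClosed_setOf_wordAt_mem [TopologicalSpace A] [DiscreteTopology A] (i : ℤ) (n : ℕ)
    (S : Set (List A)) : IsClosed {x : ℤ → A | wordAt x i n ∈ S} := by
  have hwindow : Continuous fun (x : ℤ → A) (k : Fin n) => x (i + k) :=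
    continuous_pi fun k => continuous_apply _
  exact (isClosed_discrete {f : Fin n → A | List.ofFn f ∈ S}).preimage hwindow

end Words

section Extendable

variable {A : Type*} {D : Set (List A)}

def Extendable (D : Set (List A)) (k : ℕ) (w : List A) : Prop :=
  ∃ u v : List A, u.length = k ∧ v.length = k ∧ u ++ w ++ v ∈ D

theorem Extendable.mono (hD : Factorial D) {k k' : ℕ} (hkk' : k ≤ k') {w : List A}
    (h : Extendable D k' w) : Extendable D k w := by
  obtain ⟨u, v, hu, hv, huwv⟩ := h
  refine ⟨u.drop (k' - k), v.take k, by simp [hu]; omega, by simp [hv]; omega,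
    hD.mem_of_infix ⟨u.take (k' - k), v.drop k, ?_⟩ huwv⟩
  simp only [List.append_assoc, List.take_append_drop]
  rw [← List.append_assoc, List.take_append_drop]

theorem inLangS_genShift_of_forall_extendable [Finite A] [Nonempty A] (hD : Factorial D)
    {w : List A} (hw : ∀ k, Extendable D k w) : InLangS (genShift D) w := by
  let _ : TopologicalSpace A := ⊥
  have _ : DiscreteTopology A := ⟨rfl⟩
  set n := w.length
  let C : ℕ → Set (ℤ → A) := fun k =>
    {x | wordAt x 0 n ∈ ({w} : Set (List A))} ∩ {x | wordAt x (-k) (k + n + k) ∈ D}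
  have hC_anti : ∀ k, C (k + 1) ⊆ C k := fun k x ⟨hx₀, hx⟩ =>
    ⟨hx₀, hD.mem_of_infix (wordAt_infix (by omega) (by omega)) hx⟩
  have hC_closed : ∀ k, IsClosed (C k) := fun k =>
    (isClosed_setOf_wordAt_mem _ _ _).inter (isClosed_setOf_wordAt_mem _ _ _)
  have hC_nonempty : ∀ k, (C k).Nonempty := by
    intro k
    obtain ⟨u, v, hu, hv, huwv⟩ := hw k
    obtain ⟨x, hx⟩ := exists_wordAt_eq (u ++ w ++ v) (-k)
    have hlen : (u ++ w ++ v).length = k + n + k := by simp [hu, hv, n, add_assoc]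
    rw [hlen] at hx
    have hsplit : wordAt x (-k) k ++ wordAt x 0 n ++ wordAt x n k = u ++ w ++ v := by
      rw [← hx, wordAt_add, wordAt_add]
      simp
    have hmid := (List.append_inj (List.append_inj hsplit (by simp [length_wordAt, hu, n])).1
      (by simp [length_wordAt, hu])).2
    exact ⟨x, hmid, show wordAt x (-k) (k + n + k) ∈ D by rw [hx]; exact huwv⟩
  obtain ⟨x, hx⟩ := IsCompact.nonempty_iInter_of_sequence_nonempty_isCompact_isClosed C
    hC_anti hC_nonempty (hC_closed 0).isCompact hC_closed
  rw [Set.mem_iInter] at hx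
  refine ⟨x, fun i m => ?_, 0, (hx 0).1⟩
  exact hD.mem_of_infix (wordAt_infix (by omega) (by omega)) (hx (i.natAbs + m)).2

theorem exists_extendable_imp_inLangS [Finite A] [Nonempty A] (hD : Factorial D) (n : ℕ) :
    ∃ K, ∀ w : List A, w.length = n → Extendable D K w → InLangS (genShift D) w := by
  have hev : ∀ w ∈ {w : List A | w.length = n},
      ∀ᶠ k in atTop, Extendable D k w → InLangS (genShift D) w := by
    intro w _
    by_cases h : ∀ k, Extendable D k w
    · exact Eventually.of_forall fun _ _ => inLangS_genShift_of_forall_extendable hD h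
    · obtain ⟨k₀, hk₀⟩ := not_forall.mp h
      exact eventually_atTop.2 ⟨k₀, fun k hk hext => absurd (hext.mono hD hk) hk₀⟩
  obtain ⟨K, hK⟩ := ((eventually_all_finite (List.finite_length_eq A n)).2 hev).exists
  exact ⟨K, hK⟩

end Extendable

section Counting

variable {A : Type*}

theorem ncard_setOf_length_eq [Fintype A] (n : ℕ) :
    {l : List A | l.length = n}.ncard = Fintype.card A ^ n := by
  rw [← Nat.card_coe_set_eq]
  exact (Nat.card_eq_fintype_card (α := List.Vector A n)).trans (card_vector n)

theorem ncard_le_mul_of_take_drop {S P Q : Set (List A)} (a : ℕ) (hP : P.Finite)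
    (hQ : Q.Finite) (h : ∀ w ∈ S, w.take a ∈ P ∧ w.drop a ∈ Q) :
    S.ncard ≤ P.ncard * Q.ncard := by
  have hS : S ⊆ (fun p : List A × List A => p.1 ++ p.2) '' (P ×ˢ Q) := fun w hw =>
    ⟨(w.take a, w.drop a), h w hw, List.take_append_drop a w⟩
  calc S.ncard ≤ ((fun p : List A × List A => p.1 ++ p.2) '' (P ×ˢ Q)).ncard :=
        Set.ncard_le_ncard hS ((hP.prod hQ).image _)
    _ ≤ (P ×ˢ Q).ncard := Set.ncard_image_le (hP.prod hQ)
    _ = P.ncard * Q.ncard := Set.ncard_prod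

variable [Fintype A] {D : Set (List A)}

theorem ncard_rightExtendable_le (hD : Factorial D) {n K : ℕ} {E : Set (List A)}
    (hE : E.Finite) (hKE : ∀ b : List A, b.length = n → Extendable D K b → b ∈ E) (t : ℕ) :
    {p : List A | p.length = K + n * t ∧ ∃ v : List A, v.length = K ∧ p ++ v ∈ D}.ncard ≤
      Fintype.card A ^ K * E.ncard ^ t := by
  induction t with
  | zero =>
    rw [pow_zero, mul_one, ← ncard_setOf_length_eq]
    exact Set.ncard_le_ncard (fun p hp => hp.1) (List.finite_length_eq A K)
  | succ t ih =>
    set a := K + n * t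
    calc _ ≤ {p : List A | p.length = a ∧ ∃ v : List A, v.length = K ∧ p ++ v ∈ D}.ncard *
          E.ncard := by
          refine ncard_le_mul_of_take_drop a ((List.finite_length_eq A a).subset
            fun p hp => hp.1) hE fun p ⟨hp, v, hv, hpv⟩ => ?_
          have hpv' : p.take a ++ (p.drop a ++ v) ∈ D := by rwa [← List.append_assoc,
            List.take_append_drop]
          refine ⟨⟨by simp [hp, a], (p.drop a ++ v).take K,
            by simp [hp, hv, a], hD.mem_of_infix ?_ hpv'⟩, hKE _ (by simp [hp, a, Nat.mul_succ]; omega)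
            ⟨(p.take a).drop (n * t), v, by simp [hp, a], hv,
              hD.mem_of_infix ⟨(p.take a).take (n * t), [], ?_⟩ hpv'⟩⟩
          · exact ((List.prefix_append_right_inj _).2 (List.take_prefix _ _)).isInfix
          · rw [List.append_nil, List.append_assoc, ← List.append_assoc (List.take _ _),
              List.take_append_drop]
      _ ≤ Fintype.card A ^ K * E.ncard ^ t * E.ncard := by gcongr
      _ = Fintype.card A ^ K * E.ncard ^ (t + 1) := by ring

theorem ncard_length_eq_le (hD : Factorial D) {n K : ℕ} {E : Set (List A)}
    (hE : E.Finite) (hKE : ∀ b : List A, b.length = n → Extendable D K b → b ∈ E) (t : ℕ) :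
    {w ∈ D | w.length = 2 * K + n * t}.ncard ≤ Fintype.card A ^ (2 * K) * E.ncard ^ t := by
  calc {w ∈ D | w.length = 2 * K + n * t}.ncard
      ≤ {p : List A | p.length = K + n * t ∧ ∃ v : List A, v.length = K ∧ p ++ v ∈ D}.ncard *
          {v : List A | v.length = K}.ncard := by
        refine ncard_le_mul_of_take_drop (K + n * t) ((List.finite_length_eq A _).subset
          fun p hp => hp.1) (List.finite_length_eq A K) fun w ⟨hwD, hw⟩ => ?_
        refine ⟨⟨by simp [hw]; omega, w.drop (K + n * t), by simp [hw]; omega, ?_⟩, ?_⟩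
        · rwa [List.take_append_drop]
        · simp [hw]; omega
    _ ≤ Fintype.card A ^ K * E.ncard ^ t * Fintype.card A ^ K := by
        rw [ncard_setOf_length_eq]
        gcongr
        exact ncard_rightExtendable_le hD hE hKE t
    _ = Fintype.card A ^ (2 * K) * E.ncard ^ t := by ring

end Counting

theorem log_natCast_le_log_natCast {m k : ℕ} (h : m ≤ k) : Real.log m ≤ Real.log k := by
  rcases m.eq_zero_or_pos with rfl | hm
  · simpa using Real.log_natCast_nonneg k
  · exact Real.log_le_log (by exact_mod_cast hm) (by exact_mod_cast h)

theorem le_of_forall_pos_nat_mul_le_add {a b c : ℝ} (h : ∀ t : ℕ, 0 < t → t * a ≤ c + t * b) :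
    a ≤ b := by
  by_contra! hba
  obtain ⟨t, ht⟩ := exists_nat_gt (max (c / (a - b)) 0)
  have htc : c < t * (a - b) := (div_lt_iff₀ (sub_pos.2 hba)).1 ((le_max_left _ _).trans_lt ht)
  have := h t (by exact_mod_cast (le_max_right _ _).trans_lt ht)
  linarith

theorem iInf_log_div_le_of_le_mul_pow (s : ℕ → ℕ) (hs_pos : ∀ m, 0 < s m) {n K C ℓ : ℕ}
    (hn : 0 < n) (hs : ∀ t, s (K + n * t) ≤ C * ℓ ^ t) :
    ⨅ m : ℕ+, Real.log (s m) / m ≤ Real.log ℓ / n := by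
  have hCℓ : 0 < C * ℓ := by simpa using (hs_pos _).trans_le (hs 1)
  have hC : 0 < C := pos_of_mul_pos_left hCℓ ℓ.zero_le
  have hℓ : 0 < ℓ := pos_of_mul_pos_right hCℓ C.zero_le
  set h := ⨅ m : ℕ+, Real.log (s m) / m
  have hterm_nonneg : ∀ m : ℕ+, 0 ≤ Real.log (s m) / m := fun m =>
    div_nonneg (Real.log_natCast_nonneg _) (Nat.cast_nonneg _)
  have hh : 0 ≤ h := le_ciInf hterm_nonneg
  have hbdd : BddBelow (Set.range fun m : ℕ+ => Real.log (s m) / m) := by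
    refine ⟨0, ?_⟩
    rintro _ ⟨m, rfl⟩
    exact hterm_nonneg m
  rw [le_div_iff₀ (by exact_mod_cast hn), mul_comm]
  refine le_of_forall_pos_nat_mul_le_add (c := Real.log C) fun t ht => ?_
  let m : ℕ+ := ⟨K + n * t, by positivity⟩
  calc (t : ℝ) * (n * h) = h * (t * n) := by ring
    _ ≤ h * m := by
        gcongr
        exact_mod_cast (show t * n ≤ K + n * t by rw [mul_comm]; omega)
    _ ≤ Real.log (s m) := (le_div_iff₀ (Nat.cast_pos.2 m.pos)).1 (ciInf_le hbdd m)
    _ ≤ Real.log ((C * ℓ ^ t : ℕ) : ℝ) :=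
        Real.log_le_log (by exact_mod_cast hs_pos _) (by exact_mod_cast hs t)
    _ = Real.log C + t * Real.log ℓ := by
        push_cast
        rw [Real.log_mul (by positivity) (by positivity), Real.log_pow]

/-- For a factorial collection `D` with every `D_n` nonempty, the entropy of the
generated subshift `X(D)` equals `h(D) = inf_n (1/n) log |D_n|` (= the limit). -/
theorem stmt7 {A : Type*} [Fintype A] (D : Set (List A)) (hD : Factorial D)
    (hne : ∀ n : ℕ, {w ∈ D | w.length = n}.Nonempty) :
    langEntropy (genShift D) =
      ⨅ n : ℕ+, Real.log ({w ∈ D | w.length = (n : ℕ)}.ncard) / (n : ℝ) := by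
  obtain ⟨w₁, -, hw₁⟩ := hne 1
  obtain ⟨a, -⟩ := List.length_eq_one_iff.mp hw₁
  have : Nonempty A := ⟨a⟩
  have hfinite (P : List A → Prop) (n : ℕ) : {w | P w ∧ w.length = n}.Finite :=
    (List.finite_length_eq A n).subset fun _ hw => hw.2
  have hlang_subset (n : ℕ) :
      {w : List A | w.length = n ∧ InLangS (genShift D) w} ⊆ {w ∈ D | w.length = n} := by
    rintro w ⟨hw, x, hx, i, hxw⟩
    exact ⟨hxw ▸ hx i _, hw⟩
  apply le_antisymm
  · refine ciInf_mono ⟨0, ?_⟩ fun n => ?_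
    · rintro _ ⟨n, rfl⟩
      exact div_nonneg (Real.log_natCast_nonneg _) (Nat.cast_nonneg _)
    · exact div_le_div_of_nonneg_right (log_natCast_le_log_natCast
        (Set.ncard_le_ncard (hlang_subset n) (hfinite _ n))) (Nat.cast_nonneg _)
  · refine le_ciInf fun n => ?_
    obtain ⟨K, hK⟩ := exists_extendable_imp_inLangS hD n
    exact iInf_log_div_le_of_le_mul_pow _ (fun m => (Set.ncard_pos (hfinite _ m)).2 (hne m))
      n.pos (ncard_length_eq_le hD ((List.finite_length_eq A n).subset fun _ hw => hw.1)
        fun b hb hext => ⟨hb, hK b hb hext⟩)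
end

section
/- Let D be a factorial set of words over a finite alphabet with all D_n nonempty, and for i, j ∈ ℕ let D_i^(j) = {w ∈ D_i : there exist u, v ∈ D_j with uwv ∈ D}. Then for every k, n ∈ ℕ, |D_{kn}^{(kn)}| ≤ |D_n^{(kn)}|^k. -/
/-- `D_i^{(j)}`: words of length `i` in `D` that can be extended on both sides by
words of length `j` (in `D`) to a word of `D`. -/
def Dext {A : Type*} (D : Set (List A)) (i j : ℕ) : Set (List A) :=
  {w : List A | w ∈ D ∧ w.length = i ∧
    ∃ u v : List A, u ∈ D ∧ u.length = j ∧ v ∈ D ∧ v.length = j ∧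
      (u ++ w ++ v) ∈ D}

section

variable {A : Type*}

theorem List.eq_of_blocks_eq {n : ℕ} :
    ∀ {k : ℕ} {w w' : List A}, w.length = k * n → w'.length = k * n →
      (∀ i < k, (w.drop (i * n)).take n = (w'.drop (i * n)).take n) → w = w'
  | 0, w, w', hw, hw', _ => by
    rw [Nat.zero_mul, List.length_eq_zero_iff] at hw hw'
    rw [hw, hw']
  | k + 1, w, w', hw, hw', hblocks => by
    have hhead : w.take n = w'.take n := by simpa using hblocks 0 k.succ_pos
    have htail : w.drop n = w'.drop n := by
      refine List.eq_of_blocks_eq (n := n) (k := k) (by simp [hw, Nat.succ_mul])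
        (by simp [hw', Nat.succ_mul]) fun i hi => ?_
      simpa [List.drop_drop, Nat.succ_mul, Nat.add_comm n] using hblocks (i + 1) (by omega)
    rw [← List.take_append_drop n w, ← List.take_append_drop n w', hhead, htail]

namespace Factorial

variable {D : Set (List A)}

theorem drop_take_mem (hD : Factorial D) {T : List A} (hT : T ∈ D) (a m : ℕ) :
    (T.drop a).take m ∈ D := by
  apply hD (T.take a) _ ((T.drop a).drop m)
  rwa [List.append_assoc, List.take_append_drop, List.take_append_drop]

theorem drop_take_mem_dext (hD : Factorial D) {w : List A} {m j : ℕ} (hw : w ∈ Dext D m j)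
    {a n : ℕ} (han : a + n ≤ m) : (w.drop a).take n ∈ Dext D n j := by
  obtain ⟨hwD, hwm, u, v, huD, huj, hvD, hvj, huwv⟩ := hw
  set T := u ++ w ++ v
  have hTlen : T.length = j + m + j := by simp only [T, List.length_append, huj, hwm, hvj]
  have hblock : (w.drop a).take n = ((T.drop a).drop j).take n := by
    rw [List.drop_drop, Nat.add_comm, show T = u ++ (w ++ v) from List.append_assoc ..,
      ← huj, List.drop_length_add_append,
      List.drop_append_of_le_length (by omega),
      List.take_append_of_le_length (by rw [List.length_drop]; omega)]
  refine ⟨hD.drop_take_mem hwD a n, by simp only [List.length_take, List.length_drop]; omega,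
    (T.drop a).take j, ((T.drop a).drop (j + n)).take j, hD.drop_take_mem huwv a j,
    by simp only [List.length_take, List.length_drop]; omega, ?_,
    by simp only [List.length_take, List.length_drop]; omega, ?_⟩
  · rw [List.drop_drop]
    exact hD.drop_take_mem huwv _ j
  · rw [hblock, ← List.take_add, ← List.take_add]
    exact hD.drop_take_mem huwv a _

end Factorial

theorem Dext.finite [Finite A] (D : Set (List A)) (i j : ℕ) : (Dext D i j).Finite :=
  (List.finite_length_eq A i).subset fun _ hw => hw.2.1

end

theorem stmt8_general {A : Type*} [Fintype A] (D : Set (List A)) (hD : Factorial D)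
    (k n : ℕ) :
    (Dext D (k * n) (k * n)).ncard ≤ (Dext D n (k * n)).ncard ^ k := by
  set S := Dext D n (k * n)
  have : Finite S := Dext.finite D n (k * n)
  let blocks : Dext D (k * n) (k * n) → (Fin k → S) := fun w i =>
    ⟨((w : List A).drop (i * n)).take n,
      hD.drop_take_mem_dext w.2 (by nlinarith [i.isLt] : (i : ℕ) * n + n ≤ k * n)⟩
  have hblocks : Function.Injective blocks := fun w w' h =>
    Subtype.ext <| List.eq_of_blocks_eq w.2.2.1 w'.2.2.1 fun i hi =>
      congrArg Subtype.val (congrFun h ⟨i, hi⟩)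
  calc (Dext D (k * n) (k * n)).ncard
      ≤ Nat.card (Fin k → S) := Nat.card_le_card_of_injective blocks hblocks
    _ = S.ncard ^ k := by rw [Nat.card_fun, Nat.card_fin, Nat.card_coe_set_eq]

/-- For factorial `D` with all `D_n` nonempty, `|D_{kn}^{(kn)}| ≤ |D_n^{(kn)}|^k`. -/
theorem stmt8 {A : Type*} [Fintype A] (D : Set (List A)) (hD : Factorial D)
    (hne : ∀ n : ℕ, {w ∈ D | w.length = n}.Nonempty)
    (k n : ℕ) (hk : 1 ≤ k) (hn : 1 ≤ n) :
    (Dext D (k * n) (k * n)).ncard ≤ (Dext D n (k * n)).ncard ^ k :=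
  stmt8_general D hD k n
end

section
/- If subshifts X and Y have left almost specification with constant mistake functions g ≡ m and g ≡ n respectively, then the product subshift X × Y has left almost specification with constant mistake function g ≡ m + n. -/
open Real Filter MeasureTheory

/-- The product subshift of `X ⊆ A^ℤ` and `Y ⊆ B^ℤ`. -/
def prodCarrier {A B : Type*} [TopologicalSpace A] [TopologicalSpace B]
    (X : Subshift A) (Y : Subshift B) : Set (ℤ → A × B) :=
  {z : ℤ → A × B | (fun i => (z i).1) ∈ X.carrier ∧ (fun i => (z i).2) ∈ Y.carrier}

lemma shiftMap_iterate_apply {A : Type*} (x : ℤ → A) (t : ℕ) (k : ℤ) :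
    shiftMap^[t] x k = x (k + t) := by
  induction t generalizing x with
  | zero => simp
  | succ t ih =>
    rw [Function.iterate_succ_apply, ih, shiftMap]
    exact congrArg x (by push_cast; ring)

lemma wordAt_map {A B : Type*} (f : A → B) (x : ℤ → A) (i : ℤ) (N : ℕ) :
    (wordAt x i N).map f = wordAt (f ∘ x) i N :=
  List.map_ofFn

lemma wordAt_pair {A B : Type*} (x : ℤ → A) (y : ℤ → B) (i : ℤ) (N : ℕ) :
    wordAt (fun k => (x k, y k)) i N = (wordAt x i N).zip (wordAt y i N) :=
  List.zip_of_prod (wordAt_map Prod.fst _ i N) (wordAt_map Prod.snd _ i N)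

lemma exists_wordAt_eq_of_le {A : Type*} {S : Set (ℤ → A)} (hS : Set.MapsTo shiftMap S S)
    {x : ℤ → A} (hx : x ∈ S) {p i : ℤ} (hp : p ≤ i) (N : ℕ) :
    ∃ y ∈ S, wordAt y p N = wordAt x i N := by
  refine ⟨shiftMap^[(i - p).toNat] x, hS.iterate _ hx, ?_⟩
  simp only [wordAt, shiftMap_iterate_apply, Int.toNat_of_nonneg (sub_nonneg.mpr hp)]
  congr! 2 with k
  exact congrArg x (by ring)

lemma InLangS.map {A B : Type*} {S : Set (ℤ → A)} {T : Set (ℤ → B)} (f : A → B)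
    (hf : ∀ x ∈ S, f ∘ x ∈ T) {w : List A} (hw : InLangS S w) : InLangS T (w.map f) := by
  obtain ⟨x, hx, i, hxi⟩ := hw
  exact ⟨f ∘ x, hf x hx, i, by rw [List.length_map, ← wordAt_map, hxi]⟩

section Product

variable {A B : Type*} [TopologicalSpace A] [TopologicalSpace B]
  {X : Subshift A} {Y : Subshift B}

lemma InLangS.map_fst {w : List (A × B)} (hw : InLangS (prodCarrier X Y) w) :
    InLangS X.carrier (w.map Prod.fst) :=
  hw.map Prod.fst fun _ hz => hz.1

lemma InLangS.map_snd {w : List (A × B)} (hw : InLangS (prodCarrier X Y) w) :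
    InLangS Y.carrier (w.map Prod.snd) :=
  hw.map Prod.snd fun _ hz => hz.2

/-- By shift invariance, occurrences of `u` in `X` and of `v` in `Y` can be moved to a common
position. -/
lemma InLangS.zip {u : List A} {v : List B} (hlen : u.length = v.length)
    (hu : InLangS X.carrier u) (hv : InLangS Y.carrier v) :
    InLangS (prodCarrier X Y) (u.zip v) := by
  obtain ⟨x, hx, i, hxi⟩ := hu
  obtain ⟨y, hy, j, hyj⟩ := hv
  obtain ⟨x', hx', hx'i⟩ := exists_wordAt_eq_of_le X.invariant hx (min_le_left i j) u.length
  obtain ⟨y', hy', hy'j⟩ := exists_wordAt_eq_of_le Y.invariant hy (min_le_right i j) v.length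
  refine ⟨fun k => (x' k, y' k), ⟨hx', hy'⟩, min i j, ?_⟩
  rw [List.length_zip, ← hlen, min_self, wordAt_pair, hx'i, hxi, hlen, hy'j, hyj]

end Product

lemma listHamming_cons_cons {A : Type*} [DecidableEq A] (a b : A) (v w : List A) :
    listHamming (a :: v) (b :: w) = (if a = b then 0 else 1) + listHamming v w :=
  List.sum_cons

lemma listHamming_zip_le {A B : Type*} [DecidableEq A] [DecidableEq B]
    (u u' : List A) (v v' : List B) :
    listHamming (u.zip v) (u'.zip v') ≤ listHamming u u' + listHamming v v' := by
  induction u generalizing u' v v' with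
  | nil => simp [listHamming]
  | cons a u ih =>
    rcases u' with _ | ⟨a', u'⟩
    · simp [listHamming]
    rcases v with _ | ⟨c, v⟩
    · simp [listHamming]
    rcases v' with _ | ⟨c', v'⟩
    · simp [listHamming]
    simp only [List.zip_cons_cons, listHamming_cons_cons]
    have hhead : (if (a, c) = (a', c') then 0 else 1) ≤
        (if a = a' then 0 else 1) + (if c = c' then 0 else 1) := by
      split_ifs <;> simp_all
    linarith [ih u' v v']

/-- Left almost specification with constant mistake function `g ≡ m`. -/
def HasLeftAlmostSpec {A : Type*} [DecidableEq A] (S : Set (ℤ → A)) (m : ℕ) : Prop :=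
  ∀ w1 w2 : List A, InLangS S w1 → InLangS S w2 →
    ∃ b : List A, b.length = w1.length ∧ InLangS S b ∧
      listHamming b w1 ≤ m ∧ InLangS S (b ++ w2)

/-- Correct each coordinate separately and zip the corrections: mistakes add up. -/
theorem HasLeftAlmostSpec.prod {A B : Type*} [DecidableEq A] [DecidableEq B]
    [TopologicalSpace A] [TopologicalSpace B] {X : Subshift A} {Y : Subshift B} {m n : ℕ}
    (hX : HasLeftAlmostSpec X.carrier m) (hY : HasLeftAlmostSpec Y.carrier n) :
    HasLeftAlmostSpec (prodCarrier X Y) (m + n) := by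
  intro w1 w2 h1 h2
  obtain ⟨bA, hlenA, hbA, hdistA, happA⟩ := hX _ _ h1.map_fst h2.map_fst
  obtain ⟨bB, hlenB, hbB, hdistB, happB⟩ := hY _ _ h1.map_snd h2.map_snd
  rw [List.length_map] at hlenA hlenB
  have hlen : bA.length = bB.length := hlenA.trans hlenB.symm
  have hw1 : w1 = (w1.map Prod.fst).zip (w1.map Prod.snd) := List.zip_of_prod rfl rfl
  have hw2 : w2 = (w2.map Prod.fst).zip (w2.map Prod.snd) := List.zip_of_prod rfl rfl
  refine ⟨bA.zip bB, by simp [hlenA, hlenB], hbA.zip hlen hbB, ?_, ?_⟩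
  · calc listHamming (bA.zip bB) w1
        = listHamming (bA.zip bB) ((w1.map Prod.fst).zip (w1.map Prod.snd)) := by rw [← hw1]
      _ ≤ listHamming bA (w1.map Prod.fst) + listHamming bB (w1.map Prod.snd) :=
          listHamming_zip_le _ _ _ _
      _ ≤ m + n := Nat.add_le_add hdistA hdistB
  · rw [hw2, ← List.zip_append hlen]
    refine happA.zip ?_ happB
    simp [hlen]

theorem stmt13_general {A B : Type*} [DecidableEq A] [DecidableEq B]
    [TopologicalSpace A] [TopologicalSpace B]
    (X : Subshift A) (Y : Subshift B) (m n : ℕ)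
    (hX : ∀ w1 w2 : List A, InLangS X.carrier w1 → InLangS X.carrier w2 →
      ∃ b : List A, b.length = w1.length ∧ InLangS X.carrier b ∧
        listHamming b w1 ≤ m ∧ InLangS X.carrier (b ++ w2))
    (hY : ∀ w1 w2 : List B, InLangS Y.carrier w1 → InLangS Y.carrier w2 →
      ∃ b : List B, b.length = w1.length ∧ InLangS Y.carrier b ∧
        listHamming b w1 ≤ n ∧ InLangS Y.carrier (b ++ w2)) :
    ∀ w1 w2 : List (A × B),
      InLangS (prodCarrier X Y) w1 → InLangS (prodCarrier X Y) w2 →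
      ∃ b : List (A × B), b.length = w1.length ∧ InLangS (prodCarrier X Y) b ∧
        listHamming b w1 ≤ m + n ∧ InLangS (prodCarrier X Y) (b ++ w2) :=
  HasLeftAlmostSpec.prod hX hY

/-- If `X` has LAS with `g ≡ m` and `Y` has LAS with `g ≡ n`, then the product
subshift `X × Y` has LAS with `g ≡ m + n`. -/
theorem stmt13 {A B : Type*} [Fintype A] [DecidableEq A] [Fintype B] [DecidableEq B]
    [TopologicalSpace A] [DiscreteTopology A] [TopologicalSpace B] [DiscreteTopology B]
    (X : Subshift A) (Y : Subshift B) (m n : ℕ)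
    (hX : ∀ w1 w2 : List A, InLangS X.carrier w1 → InLangS X.carrier w2 →
      ∃ b : List A, b.length = w1.length ∧ InLangS X.carrier b ∧
        listHamming b w1 ≤ m ∧ InLangS X.carrier (b ++ w2))
    (hY : ∀ w1 w2 : List B, InLangS Y.carrier w1 → InLangS Y.carrier w2 →
      ∃ b : List B, b.length = w1.length ∧ InLangS Y.carrier b ∧
        listHamming b w1 ≤ n ∧ InLangS Y.carrier (b ++ w2)) :
    ∀ w1 w2 : List (A × B),
      InLangS (prodCarrier X Y) w1 → InLangS (prodCarrier X Y) w2 →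
      ∃ b : List (A × B), b.length = w1.length ∧ InLangS (prodCarrier X Y) b ∧
        listHamming b w1 ≤ m + n ∧ InLangS (prodCarrier X Y) (b ++ w2) :=
  stmt13_general X Y m n hX hY
end

section
/- The subshift X = {x ∈ {0,1}^ℤ : x contains at most one occurrence of the symbol 1} has left almost specification with constant mistake function g ≡ 1, but X is not irreducible. -/
open Real Filter MeasureTheory

/-- The subshift of 0-1 sequences with at most one occurrence of the symbol 1
(`true`). -/
def atMostOneOne : Set (ℤ → Bool) :=
  {x : ℤ → Bool | ∀ i j : ℤ, x i = true → x j = true → i = j}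

/-! A word lies in the language of `atMostOneOne` exactly when it contains at most one `true`
(extend it by `false` to realise it). Hence replacing `w1` by the all-`false` word of the same
length costs at most one mistake and leaves room for the single `true` of `w2`, whereas
`[true] ++ z ++ [true]` contains two `true`s whatever `z` is. -/

theorem List.count_ofFn {α : Type*} [DecidableEq α] {n : ℕ} (f : Fin n → α) (a : α) :
    (List.ofFn f).count a = (Finset.univ.filter fun i => f i = a).card := by
  rw [← Multiset.coe_count, ← Fin.univ_val_map, Multiset.count_map]
  simp [Finset.card, Finset.filter_val, eq_comm]

theorem List.count_ofFn_le_one_iff {α : Type*} [DecidableEq α] {n : ℕ} (f : Fin n → α) (a : α) :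
    (List.ofFn f).count a ≤ 1 ↔ ∀ i j, f i = a → f j = a → i = j := by
  simp [List.count_ofFn, Finset.card_le_one_iff]

theorem Fin.intCast_val_injective (n : ℕ) : Function.Injective (fun k : Fin n => ((k : ℕ) : ℤ)) :=
  Nat.cast_injective.comp Fin.val_injective

theorem wordAt_extend_finCast {A : Type*} {n : ℕ} (f : Fin n → A) (e : ℤ → A) :
    wordAt (Function.extend (fun k : Fin n => ((k : ℕ) : ℤ)) f e) 0 n = List.ofFn f := by
  simp only [wordAt, zero_add]
  congr 1
  funext k
  exact (Fin.intCast_val_injective n).extend_apply f e k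

theorem inLangS_atMostOneOne_iff (w : List Bool) :
    InLangS atMostOneOne w ↔ w.count true ≤ 1 := by
  constructor
  · rintro ⟨x, hx, i, hw⟩
    rw [← hw, wordAt, List.count_ofFn_le_one_iff]
    intro a b ha hb
    have := hx _ _ ha hb
    omega
  · intro h
    rw [← List.ofFn_get w, List.count_ofFn_le_one_iff] at h
    refine ⟨Function.extend (fun k : Fin w.length => ((k : ℕ) : ℤ)) w.get (fun _ => false),
      ?_, 0, by rw [wordAt_extend_finCast, List.ofFn_get]⟩
    have h_true : ∀ j, Function.extend (fun k : Fin w.length => ((k : ℕ) : ℤ)) w.get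
        (fun _ => false) j = true → ∃ k, w.get k = true ∧ ((k : ℕ) : ℤ) = j := by
      intro j hj
      by_cases hrange : ∃ k : Fin w.length, ((k : ℕ) : ℤ) = j
      · obtain ⟨k, rfl⟩ := hrange
        exact ⟨k, by rwa [(Fin.intCast_val_injective _).extend_apply] at hj, rfl⟩
      · simp [Function.extend_apply' _ _ _ hrange] at hj
    intro i j hi hj
    obtain ⟨a, ha, rfl⟩ := h_true i hi
    obtain ⟨b, hb, rfl⟩ := h_true j hj
    rw [h a b ha hb]

theorem listHamming_replicate_false (w : List Bool) :
    listHamming (List.replicate w.length false) w = w.count true := by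
  induction w with
  | nil => rfl
  | cons a t ih =>
    simp only [listHamming] at ih
    cases a <;> simp [listHamming, List.replicate_succ, ih, add_comm]

/-- The subshift of 0-1 sequences containing at most one 1 has left almost
specification with constant mistake function `g ≡ 1`, but is not irreducible. -/
theorem stmt17 :
    (∀ w1 w2 : List Bool, InLangS atMostOneOne w1 → InLangS atMostOneOne w2 →
      ∃ b : List Bool, b.length = w1.length ∧ InLangS atMostOneOne b ∧
        listHamming b w1 ≤ 1 ∧ InLangS atMostOneOne (b ++ w2)) ∧
    ¬ (∀ u v : List Bool, InLangS atMostOneOne u → InLangS atMostOneOne v →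
        ∃ z : List Bool, InLangS atMostOneOne (u ++ z ++ v)) := by
  simp only [inLangS_atMostOneOne_iff]
  constructor
  · intro w1 w2 h1 h2
    refine ⟨List.replicate w1.length false, List.length_replicate, ?_, ?_, ?_⟩
    · simp [List.count_replicate]
    · rwa [listHamming_replicate_false]
    · simpa [List.count_append, List.count_replicate] using h2
  · intro h
    obtain ⟨z, hz⟩ := h [true] [true] (by simp) (by simp)
    simp [List.count_append] at hz
end

section
/- Let X be a subshift and suppose G ⊆ L(X) is closed under concatenation (v, w ∈ G implies vw ∈ G) and satisfies gcd{|v| : v ∈ G} = 1. Then there exists M ∈ ℕ such that G contains a word of every length m ≥ M, and for n ≥ M + K + N (where K, N, Q come from a bound |G_j| ≥ Q·e^{j·h(X)} for some j ∈ [n−N, n] whenever n ≥ K), the number of n-periodic points of X satisfies |Per_n(X)| ≥ Q·e^{−(M+N)h(X)}·e^{n·h(X)}. -/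
open Real Filter MeasureTheory

/-!
The lengths of the words of `G` form an additive semigroup of gcd `1`, so they contain every
`m ≥ M`. For `n ≥ M + K + N` pick `j ∈ [n - M - N, n - M]` with `|G_j| ≥ Q e^{j h}`. Appending a
fixed word of `G` of length `n - j ≥ M` embeds `G_j` into `G_n`, and every word of `G_n` is read
off an `n`-periodic point of `X`, so `|Per_n(X)| ≥ |G_n| ≥ |G_j| ≥ Q e^{j h} ≥ Q e^{(n - M - N) h}`,
the last step because `h ≥ 0`.
-/

lemma Nat.eventually_mem_of_add_mem_of_setGcd_eq_one {T : Set ℕ}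
    (hadd : ∀ a ∈ T, ∀ b ∈ T, a + b ∈ T) (hgcd : Nat.setGcd T = 1) :
    ∀ᶠ m in atTop, m ∈ T := by
  have hclosure : ∀ m ∈ AddSubmonoid.closure T, m = 0 ∨ m ∈ T := fun m hm => by
    induction hm using AddSubmonoid.closure_induction with
    | mem a ha => exact Or.inr ha
    | zero => exact Or.inl rfl
    | add a b _ _ ha hb =>
      rcases ha with rfl | ha
      · simpa using hb
      rcases hb with rfl | hb
      · simpa using Or.inr ha
      exact Or.inr (hadd a ha b hb)
  obtain ⟨n, hn⟩ := Nat.exists_mem_closure_of_ge T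
  filter_upwards [eventually_ge_atTop n, eventually_gt_atTop 0] with m hmn hm
  exact (hclosure m (hn m hmn (hgcd ▸ one_dvd m))).resolve_left hm.ne'

lemma Function.Periodic.eq_emod {A : Type*} {x : ℤ → A} {n : ℤ} (hx : Function.Periodic x n)
    (i : ℤ) : x i = x (i % n) := by
  rw [Int.emod_def, mul_comm]
  exact (hx.sub_int_mul_eq _).symm

lemma finite_setOf_periodic {A : Type*} [Finite A] {n : ℕ} (hn : 0 < n) :
    {x : ℤ → A | Function.Periodic x n}.Finite := by
  refine Set.Finite.of_finite_image (f := fun x (k : Set.Ico (0 : ℤ) n) => x k)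
    (Set.toFinite _) fun x hx y hy hxy => funext fun i => ?_
  have hmem : i % n ∈ Set.Ico (0 : ℤ) n :=
    ⟨Int.emod_nonneg i (by omega), Int.emod_lt_of_pos i (by omega)⟩
  rw [Function.Periodic.eq_emod hx, Function.Periodic.eq_emod hy]
  exact congrFun hxy ⟨_, hmem⟩

lemma langEntropy_nonneg {A : Type*} [Finite A] {S : Set (ℤ → A)} (hS : S.Nonempty) :
    0 ≤ langEntropy S := by
  obtain ⟨x, hx⟩ := hS
  refine le_ciInf fun n => div_nonneg (Real.log_nonneg ?_) (by positivity)
  have hword : wordAt x 0 n ∈ {w : List A | w.length = (n : ℕ) ∧ InLangS S w} := by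
    have hlen : (wordAt x 0 n).length = n := List.length_ofFn
    exact ⟨hlen, x, hx, 0, by rw [hlen]⟩
  exact_mod_cast (Set.ncard_pos ((List.finite_length_eq A n).subset fun w hw => hw.1)).mpr
    ⟨_, hword⟩

lemma ncard_length_eq_le_ncard_append {A : Type*} [Finite A] {G : Set (List A)}
    (hconcat : ∀ v ∈ G, ∀ w ∈ G, v ++ w ∈ G) {u : List A} (hu : u ∈ G) (j : ℕ) :
    {w ∈ G | w.length = j}.ncard ≤ {w ∈ G | w.length = j + u.length}.ncard :=
  Set.ncard_le_ncard_of_injOn (· ++ u)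
    (fun w ⟨hw, hwj⟩ => ⟨hconcat w hw u hu, by simp [hwj]⟩)
    (fun _ _ _ _ h => List.append_cancel_right h)
    ((List.finite_length_eq A _).subset fun _ hw => hw.2)

lemma ncard_length_eq_le_ncard_periodic {A : Type*} [Finite A] {S : Set (ℤ → A)}
    {G : Set (List A)} (hper : ∀ w ∈ G, ∃ x ∈ S,
      Function.Periodic x w.length ∧ wordAt x 0 w.length = w) {n : ℕ} (hn : 0 < n) :
    {w ∈ G | w.length = n}.ncard ≤ {x ∈ S | Function.Periodic x n}.ncard := by
  have hfin : {x ∈ S | Function.Periodic x n}.Finite :=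
    (finite_setOf_periodic hn).subset fun _ hx => hx.2
  have hsub : {w ∈ G | w.length = n} ⊆ (wordAt · 0 n) '' {x ∈ S | Function.Periodic x n} := by
    rintro w ⟨hw, rfl⟩
    obtain ⟨x, hx, hxper, hxw⟩ := hper w hw
    exact ⟨x, ⟨hx, hxper⟩, hxw⟩
  exact (Set.ncard_le_ncard hsub (hfin.image _)).trans (Set.ncard_image_le hfin)

theorem stmt18_general {A : Type*} [Fintype A]
    [TopologicalSpace A]
    (X : Subshift A) (G : Set (List A))
    (hconcat : ∀ v ∈ G, ∀ w ∈ G, (v ++ w) ∈ G)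
    (hper : ∀ w ∈ G, ∃ x ∈ X.carrier,
      (∀ i : ℤ, x (i + (w.length : ℤ)) = x i) ∧ wordAt x 0 w.length = w)
    (hgcd : ∀ d : ℕ, (∀ v ∈ G, d ∣ v.length) → d = 1)
    (Q : ℝ) (hQ : 0 < Q) (K N : ℕ)
    (hbig : ∀ n : ℕ, K ≤ n → ∃ j : ℕ, n - N ≤ j ∧ j ≤ n ∧
      Q * Real.exp ((j : ℝ) * langEntropy X.carrier) ≤
        ({w ∈ G | w.length = j}.ncard : ℝ)) :
    ∃ M : ℕ,
      (∀ m : ℕ, M ≤ m → ∃ v ∈ G, v.length = m) ∧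
      ∀ n : ℕ, M + K + N ≤ n →
        Q * Real.exp (-((M + N : ℕ) : ℝ) * langEntropy X.carrier) *
            Real.exp ((n : ℝ) * langEntropy X.carrier) ≤
          ({x ∈ X.carrier | ∀ i : ℤ, x (i + (n : ℤ)) = x i}.ncard : ℝ) := by
  set T : Set ℕ := {m | ∃ v ∈ G, v.length = m}
  have hT : ∀ᶠ m in atTop, m ∈ T := Nat.eventually_mem_of_add_mem_of_setGcd_eq_one
    (by rintro _ ⟨v, hv, rfl⟩ _ ⟨w, hw, rfl⟩; exact ⟨v ++ w, hconcat v hv w hw, by simp⟩)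
    (hgcd _ fun v hv => Nat.setGcd_dvd_of_mem ⟨v, hv, rfl⟩)
  obtain ⟨M, hM⟩ := (hT.and (eventually_gt_atTop 0)).exists_forall_of_atTop
  refine ⟨M, fun m hm => (hM m hm).1, fun n hn => ?_⟩
  have hentropy : 0 ≤ langEntropy X.carrier := by
    obtain ⟨v, hv, -⟩ := (hM M le_rfl).1
    obtain ⟨x, hx, -⟩ := hper v hv
    exact langEntropy_nonneg ⟨x, hx⟩
  obtain ⟨j, hjlow, hjup, hGj⟩ := hbig (n - M) (by omega)
  obtain ⟨u, hu, hulen⟩ := (hM (n - j) (by omega)).1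
  have hjn : j + u.length = n := by omega
  calc Q * Real.exp (-((M + N : ℕ) : ℝ) * langEntropy X.carrier) *
        Real.exp ((n : ℝ) * langEntropy X.carrier)
      = Q * Real.exp (((n : ℝ) - (M + N : ℕ)) * langEntropy X.carrier) := by
        rw [mul_assoc, ← Real.exp_add]; ring_nf
    _ ≤ Q * Real.exp ((j : ℝ) * langEntropy X.carrier) := by
        gcongr
        rw [sub_le_iff_le_add]
        exact_mod_cast (by omega : n ≤ j + (M + N))
    _ ≤ {w ∈ G | w.length = j}.ncard := hGj
    _ ≤ {w ∈ G | w.length = n}.ncard := by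
        exact_mod_cast hjn ▸ ncard_length_eq_le_ncard_append hconcat hu j
    _ ≤ _ := by
        exact_mod_cast ncard_length_eq_le_ncard_periodic hper ((hM M le_rfl).2.trans_le (by omega))

/-- If `G ⊆ L(X)` is closed under concatenation, every word of `G` begins a
periodic point of `X` of period its length, `gcd{|v| : v ∈ G} = 1`, and there are
`Q > 0`, `K, N` with: for all `n ≥ K` some `j ∈ [n-N, n]` has `|G_j| ≥ Q e^{j h(X)}`;
then there is `M` such that `G` contains words of every length `m ≥ M`, and for
all `n ≥ M + K + N` the number of `n`-periodic points of `X` is at least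
`Q · e^{-(M+N) h(X)} · e^{n h(X)}`. -/
theorem stmt18 {A : Type*} [Fintype A] [DecidableEq A]
    [TopologicalSpace A] [DiscreteTopology A]
    (X : Subshift A) (G : Set (List A))
    (hGL : ∀ w ∈ G, InLangS X.carrier w)
    (hconcat : ∀ v ∈ G, ∀ w ∈ G, (v ++ w) ∈ G)
    (hper : ∀ w ∈ G, ∃ x ∈ X.carrier,
      (∀ i : ℤ, x (i + (w.length : ℤ)) = x i) ∧ wordAt x 0 w.length = w)
    (hgcd : ∀ d : ℕ, (∀ v ∈ G, d ∣ v.length) → d = 1)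
    (Q : ℝ) (hQ : 0 < Q) (K N : ℕ)
    (hbig : ∀ n : ℕ, K ≤ n → ∃ j : ℕ, n - N ≤ j ∧ j ≤ n ∧
      Q * Real.exp ((j : ℝ) * langEntropy X.carrier) ≤
        ({w ∈ G | w.length = j}.ncard : ℝ)) :
    ∃ M : ℕ,
      (∀ m : ℕ, M ≤ m → ∃ v ∈ G, v.length = m) ∧
      ∀ n : ℕ, M + K + N ≤ n →
        Q * Real.exp (-((M + N : ℕ) : ℝ) * langEntropy X.carrier) *
            Real.exp ((n : ℝ) * langEntropy X.carrier) ≤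
          ({x ∈ X.carrier | ∀ i : ℤ, x (i + (n : ℤ)) = x i}.ncard : ℝ) :=
  stmt18_general X G hconcat hper hgcd Q hQ K N hbig
end
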